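/- Let f be a Fibonacci map. Then for every n ≥ 0, |c_{S_n}| > |c_{S_{n+1}}|, i.e. the distance from f^{S_n}(c) to the critical point c is strictly greater than the distance from f^{S_{n+1}}(c) to c. -/

import Mathlib

noncomputable section

/-- The Fibonacci numbers `S 0 = 1`, `S 1 = 2`, `S (k+2) = S (k+1) + S k`. -/
def fibS : ℕ → ℕ
  | 0 => 1
  | 1 => 2
  | n + 2 => fibS (n + 1) + fibS n

/-- `f : [0,1] → [0,1]` is unimodal with critical point `c`: continuous, maps `[0,1]` into
itself, `f 0 = f 1 = 0`, `c ∈ (0,1)`, strictly increasing on `[0,c]`, strictly decreasing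
on `[c,1]`. -/
def IsUnimodal (f : ℝ → ℝ) (c : ℝ) : Prop :=
  ContinuousOn f (Set.Icc 0 1) ∧ Set.MapsTo f (Set.Icc 0 1) (Set.Icc 0 1) ∧
  f 0 = 0 ∧ f 1 = 0 ∧ c ∈ Set.Ioo (0 : ℝ) 1 ∧
  StrictMonoOn f (Set.Icc 0 c) ∧ StrictAntiOn f (Set.Icc c 1)

/-- `f` is symmetric about `c`: `f (2c - x) = f x` whenever both points lie in `[0,1]`
(the symmetric point of `x` is `x̂ = 2c - x`). -/
def SymmetricAbout (f : ℝ → ℝ) (c : ℝ) : Prop :=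
  ∀ x ∈ Set.Icc (0 : ℝ) 1, 2 * c - x ∈ Set.Icc (0 : ℝ) 1 → f (2 * c - x) = f x

/-- The distance from `c` to a nearest `k`-th preimage `c₋ₖ` of `c` in `[0,1]`,
i.e. `|c₋ₖ - c| = |c₋ₖ|`. -/
def preimDist (f : ℝ → ℝ) (c : ℝ) (k : ℕ) : ℝ :=
  sInf ((fun x => |x - c|) '' {x | x ∈ Set.Icc (0 : ℝ) 1 ∧ f^[k] x = c})

/-- `S` is the sequence of cutting times of `f`: `S 0 = 1`, and `S (i+1)` is the least
`k ≥ S i` for which the nearest `k`-th preimage `c₋ₖ` of `c` lies in the symmetric open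
interval `(c₋ₛᵢ, (c₋ₛᵢ)^)`, i.e. `c₋ₖ` exists and is strictly closer to `c` than `c₋ₛᵢ`. -/
def IsCuttingSeq (f : ℝ → ℝ) (c : ℝ) (S : ℕ → ℕ) : Prop :=
  S 0 = 1 ∧ ∀ i, IsLeast {k | S i ≤ k ∧
    ({x | x ∈ Set.Icc (0 : ℝ) 1 ∧ f^[k] x = c}).Nonempty ∧
    preimDist f c k < preimDist f c (S i)} (S (i + 1))

/-- A Fibonacci map: a symmetric unimodal map whose cutting times are exactly the
Fibonacci numbers `1, 2, 3, 5, 8, …`. -/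
def IsFibonacciMap (f : ℝ → ℝ) (c : ℝ) : Prop :=
  IsUnimodal f c ∧ SymmetricAbout f c ∧ IsCuttingSeq f c fibS


/-!
Write `Dᵢ = |c₋ₛᵢ|`. No preimage of `c` of order `0 < j < Sₙ` is as close to `c` as `Dₙ`, so
`f^{Sₙ}` is monotone on the interval between `c` and a nearest `c₋ₛₙ`; it carries the point
`c₋ₛₙ₊₁` of that interval to a preimage of order `Sₙ₊₁ - Sₙ` strictly between `c` and `c_{Sₙ}`,
whence `|c_{Sₙ}| > |c₋₍ₛₙ₊₁₋ₛₙ₎|`. Conversely, if `|c_{Sₘ}| > Dₖ`, then by the intermediate value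
theorem the same kind of interval for `Sₘ` contains a preimage of order `Sₖ + Sₘ` closer than `Dₘ`,
so `Sₘ₊₁ ≤ Sₖ + Sₘ`. For Fibonacci cutting times `Sₙ₊₂ - Sₙ₊₁ = Sₙ` and `Sₙ + Sₙ₊₂ < Sₙ₊₃`, so
`|c_{Sₙ₊₂}| ≤ Dₙ < |c_{Sₙ₊₁}|`.
-/

open Set Function

theorem fibS_lt_fibS_succ : ∀ n, fibS n < fibS (n + 1)
  | 0 => by decide
  | 1 => by decide
  | n + 2 => by
      have := fibS_lt_fibS_succ n
      simp only [fibS] at this ⊢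
      omega

theorem fibS_add_two_sub (n : ℕ) : fibS (n + 2) - fibS (n + 1) = fibS n := by
  simp only [fibS]
  omega

theorem abs_sub_left_lt_of_mem_uIcc {a b x : ℝ} (hx : x ∈ uIcc a b) (hxb : x ≠ b) :
    |x - a| < |b - a| := by
  rcases mem_uIcc.1 hx with ⟨hax, hxb'⟩ | ⟨hbx, hxa⟩
  · rw [abs_of_nonneg (sub_nonneg.2 hax), abs_of_nonneg (by linarith)]
    linarith [lt_of_le_of_ne hxb' hxb]
  · rw [abs_of_nonpos (sub_nonpos.2 hxa), abs_of_nonpos (by linarith)]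
    linarith [lt_of_le_of_ne hbx hxb.symm]

theorem mem_uIoo_apply_of_strictMonoOn_or_strictAntiOn {g : ℝ → ℝ} {a b x : ℝ}
    (hg : StrictMonoOn g (uIcc a b) ∨ StrictAntiOn g (uIcc a b)) (hx : x ∈ uIoo a b) :
    g x ∈ uIoo (g a) (g b) := by
  wlog hab : a ≤ b generalizing a b
  · rw [uIcc_comm] at hg
    rw [uIoo_comm] at hx ⊢
    exact this hg hx (le_of_not_ge hab)
  rw [uIcc_of_le hab] at hg
  rw [uIoo_of_le hab] at hx
  have ha : a ∈ Icc a b := left_mem_Icc.2 hab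
  have hb : b ∈ Icc a b := right_mem_Icc.2 hab
  have hx' : x ∈ Icc a b := Ioo_subset_Icc_self hx
  rcases hg with hg | hg
  · exact mem_uIoo_of_lt (hg ha hx' hx.1) (hg hx' hb hx.2)
  · exact mem_uIoo_of_gt (hg hx' hb hx.2) (hg ha hx' hx.1)

section

variable {f : ℝ → ℝ} {c : ℝ} {S : ℕ → ℕ}

def critPreimages (f : ℝ → ℝ) (c : ℝ) (k : ℕ) : Set ℝ :=
  {x | x ∈ Icc (0 : ℝ) 1 ∧ f^[k] x = c}

theorem preimDist_eq_sInf_image (k : ℕ) :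
    preimDist f c k = sInf ((fun x => |x - c|) '' critPreimages f c k) := rfl

theorem preimDist_nonneg (k : ℕ) : 0 ≤ preimDist f c k :=
  Real.sInf_nonneg <| forall_mem_image.2 fun _ _ => abs_nonneg _

theorem preimDist_le_of_mem {k : ℕ} {x : ℝ} (hx : x ∈ critPreimages f c k) :
    preimDist f c k ≤ |x - c| :=
  csInf_le ⟨0, forall_mem_image.2 fun _ _ => abs_nonneg _⟩ (mem_image_of_mem _ hx)

namespace IsUnimodal

variable (hu : IsUnimodal f c)
include hu

theorem continuousOn : ContinuousOn f (Icc 0 1) := hu.1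

theorem mapsTo : MapsTo f (Icc 0 1) (Icc 0 1) := hu.2.1

theorem crit_mem_Ioo : c ∈ Ioo (0 : ℝ) 1 := hu.2.2.2.2.1

theorem crit_mem_Icc : c ∈ Icc (0 : ℝ) 1 := Ioo_subset_Icc_self hu.crit_mem_Ioo

theorem apply_zero : f 0 = 0 := hu.2.2.1

theorem apply_one : f 1 = 0 := hu.2.2.2.1

theorem strictMonoOn : StrictMonoOn f (Icc 0 c) := hu.2.2.2.2.2.1

theorem strictAntiOn : StrictAntiOn f (Icc c 1) := hu.2.2.2.2.2.2

theorem apply_le_apply_crit {x : ℝ} (hx : x ∈ Icc (0 : ℝ) 1) : f x ≤ f c := by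
  rcases le_total x c with hxc | hcx
  · exact hu.strictMonoOn.monotoneOn ⟨hx.1, hxc⟩ ⟨hu.crit_mem_Icc.1, le_rfl⟩ hxc
  · exact hu.strictAntiOn.antitoneOn ⟨le_rfl, hu.crit_mem_Icc.2⟩ ⟨hcx, hx.2⟩ hcx

theorem mapsTo_iterate (k : ℕ) : MapsTo f^[k] (Icc 0 1) (Icc 0 1) := hu.mapsTo.iterate k

theorem continuousOn_iterate (k : ℕ) : ContinuousOn f^[k] (Icc 0 1) := by
  induction k with
  | zero => exact continuousOn_id
  | succ k ih =>
      rw [iterate_succ']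
      exact hu.continuousOn.comp ih (hu.mapsTo_iterate k)

theorem exists_preimDist_eq {k : ℕ} (hne : (critPreimages f c k).Nonempty) :
    ∃ z ∈ critPreimages f c k, |z - c| = preimDist f c k := by
  have hcpt : IsCompact (critPreimages f c k) :=
    isCompact_Icc.of_isClosed_subset
      ((hu.continuousOn_iterate k).preimage_isClosed_of_isClosed isClosed_Icc isClosed_singleton)
      fun _ hx => hx.1
  exact (hcpt.image (continuous_sub_right c).abs).sInf_mem (hne.image _)

theorem strictMonoOn_or_strictAntiOn_iterate {J : Set ℝ} (hJ : J ⊆ Icc 0 1) {k : ℕ}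
    (hside : ∀ j < k, MapsTo f^[j] J (Iic c) ∨ MapsTo f^[j] J (Ici c)) :
    StrictMonoOn f^[k] J ∨ StrictAntiOn f^[k] J := by
  induction k with
  | zero => exact Or.inl strictMonoOn_id
  | succ k ih =>
      have hmono := ih fun j hj => hside j (hj.trans k.lt_succ_self)
      have hmaps : MapsTo f^[k] J (Icc 0 1) := (hu.mapsTo_iterate k).mono_left hJ
      rw [iterate_succ']
      rcases hside k k.lt_succ_self with hle | hge
      · have hleft : MapsTo f^[k] J (Icc 0 c) := fun x hx => ⟨(hmaps hx).1, hle hx⟩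
        exact hmono.imp (hu.strictMonoOn.comp · hleft)
          (hu.strictMonoOn.comp_strictAntiOn · hleft)
      · have hright : MapsTo f^[k] J (Icc c 1) := fun x hx => ⟨hge hx, (hmaps hx).2⟩
        exact hmono.symm.imp (hu.strictAntiOn.comp · hright)
          (hu.strictAntiOn.comp_strictMonoOn · hright)

theorem mapsTo_iterate_Iic_or_Ici {J : Set ℝ} (hJ : IsPreconnected J) (hJ1 : J ⊆ Icc 0 1)
    {j : ℕ} (hc : ∀ x ∈ J, f^[j] x ≠ c) :
    MapsTo f^[j] J (Iic c) ∨ MapsTo f^[j] J (Ici c) := by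
  simp only [MapsTo, mem_Iic, mem_Ici]
  by_contra! ⟨⟨x, hx, hxc⟩, ⟨y, hy, hyc⟩⟩
  obtain ⟨ξ, hξ, hξc⟩ := (hJ.image _ ((hu.continuousOn_iterate j).mono hJ1)).Icc_subset
    (mem_image_of_mem _ hy) (mem_image_of_mem _ hx) ⟨hyc.le, hxc.le⟩
  exact hc ξ hξ hξc

theorem strictMonoOn_or_strictAntiOn_iterate_uIcc {z : ℝ} (hJ : uIcc c z ⊆ Icc 0 1) {k : ℕ}
    (hc : ∀ j, 0 < j → j < k → ∀ x ∈ uIcc c z, f^[j] x ≠ c) :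
    StrictMonoOn f^[k] (uIcc c z) ∨ StrictAntiOn f^[k] (uIcc c z) := by
  refine hu.strictMonoOn_or_strictAntiOn_iterate hJ fun j hj => ?_
  rcases j.eq_zero_or_pos with rfl | hj0
  · rcases le_total c z with hcz | hzc
    · exact Or.inr fun x hx => (uIcc_of_le hcz ▸ hx).1
    · exact Or.inl fun x hx => (uIcc_of_ge hzc ▸ hx).2
  · exact hu.mapsTo_iterate_Iic_or_Ici isPreconnected_uIcc hJ (hc j hj0 hj)

end IsUnimodal

theorem SymmetricAbout.two_mul_sub_mem_critPreimages (hs : SymmetricAbout f c) {k : ℕ}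
    (hk : 0 < k) {x : ℝ} (hx : x ∈ critPreimages f c k) (hx' : 2 * c - x ∈ Icc (0 : ℝ) 1) :
    2 * c - x ∈ critPreimages f c k := by
  obtain ⟨m, rfl⟩ := Nat.exists_eq_add_one_of_ne_zero hk.ne'
  refine ⟨hx', ?_⟩
  rw [iterate_succ_apply, hs x hx.1 hx']
  exact hx.2

namespace IsCuttingSeq

variable (hS : IsCuttingSeq f c S)
include hS

theorem le_succ (i : ℕ) : S i ≤ S (i + 1) := (hS.2 i).1.1

theorem preimDist_succ_lt (i : ℕ) : preimDist f c (S (i + 1)) < preimDist f c (S i) :=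
  (hS.2 i).1.2.2

theorem preimDist_pos (i : ℕ) : 0 < preimDist f c (S i) :=
  (preimDist_nonneg _).trans_lt (hS.preimDist_succ_lt i)

theorem one_le (i : ℕ) : 1 ≤ S i :=
  hS.1 ▸ monotone_nat_of_le_succ hS.le_succ (Nat.zero_le i)

theorem preimDist_le_preimDist_one (i : ℕ) : preimDist f c (S i) ≤ preimDist f c 1 := by
  have := (strictAnti_nat_of_succ_lt (f := fun i => preimDist f c (S i))
    hS.preimDist_succ_lt).antitone (Nat.zero_le i)
  rwa [hS.1] at this

theorem nonempty_critPreimages (i : ℕ) : (critPreimages f c (S i)).Nonempty := by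
  by_contra h
  have h0 : preimDist f c (S i) = 0 := by
    rw [preimDist_eq_sInf_image, not_nonempty_iff_eq_empty.1 h, image_empty, Real.sInf_empty]
  exact (hS.preimDist_pos i).ne' h0

theorem preimDist_lt_abs_of_lt {j n : ℕ} (hj : 0 < j) (hjn : j < S n) {x : ℝ}
    (hx : x ∈ critPreimages f c j) : preimDist f c (S n) < |x - c| := by
  induction n with
  | zero => rw [hS.1] at hjn; omega
  | succ n ih =>
      rcases lt_or_ge j (S n) with hlt | hge
      · exact (hS.preimDist_succ_lt n).trans (ih hlt)
      · have hnot : preimDist f c (S n) ≤ preimDist f c j :=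
          not_lt.1 fun hlt => (hjn.trans_le ((hS.2 n).2 ⟨hge, ⟨x, hx⟩, hlt⟩)).false
        exact (hS.preimDist_succ_lt n).trans_le (hnot.trans (preimDist_le_of_mem hx))

end IsCuttingSeq

variable (hu : IsUnimodal f c) (hs : SymmetricAbout f c) (hS : IsCuttingSeq f c S)

include hu hS in
theorem crit_lt_apply_crit : c < f c := by
  obtain ⟨x, hx, hfx⟩ := hS.nonempty_critPreimages 0
  have hpos := hS.preimDist_pos 0
  rw [hS.1] at hfx hpos
  refine lt_of_le_of_ne (hfx ▸ hu.apply_le_apply_crit hx) fun hc => ?_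
  have hc1 : c ∈ critPreimages f c 1 := ⟨hu.crit_mem_Icc, hc.symm⟩
  have := hpos.trans_le (preimDist_le_of_mem hc1)
  rw [sub_self, abs_zero] at this
  exact this.false

include hu hS in
theorem preimDist_one_lt_crit : preimDist f c 1 < c := by
  obtain ⟨z, ⟨hz0, hzc⟩, hfz⟩ := intermediate_value_Ioo hu.crit_mem_Ioo.1.le
    (hu.continuousOn.mono (Icc_subset_Icc le_rfl hu.crit_mem_Icc.2))
    (by rw [hu.apply_zero]; exact ⟨hu.crit_mem_Ioo.1, crit_lt_apply_crit hu hS⟩)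
  have := preimDist_le_of_mem (show z ∈ critPreimages f c 1 from
    ⟨⟨hz0.le, hzc.le.trans hu.crit_mem_Icc.2⟩, hfz⟩)
  rw [abs_of_neg (sub_neg.2 hzc)] at this
  linarith

include hu hS in
theorem preimDist_one_lt_one_sub_crit : preimDist f c 1 < 1 - c := by
  obtain ⟨z, ⟨hcz, hz1⟩, hfz⟩ := intermediate_value_Ioo' hu.crit_mem_Ioo.2.le
    (hu.continuousOn.mono (Icc_subset_Icc hu.crit_mem_Icc.1 le_rfl))
    (by rw [hu.apply_one]; exact ⟨hu.crit_mem_Ioo.1, crit_lt_apply_crit hu hS⟩)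
  have := preimDist_le_of_mem (show z ∈ critPreimages f c 1 from
    ⟨⟨hu.crit_mem_Icc.1.trans hcz.le, hz1.le⟩, hfz⟩)
  rw [abs_of_pos (sub_pos.2 hcz)] at this
  linarith

include hu hS in
theorem uIcc_subset_Icc_of_abs_sub_le {i : ℕ} {z : ℝ} (hz : |z - c| ≤ preimDist f c (S i)) :
    uIcc c z ⊆ Icc 0 1 := fun x hx => by
  have hx := abs_le.1 <|
    (abs_sub_left_of_mem_uIcc hx).trans (hz.trans (hS.preimDist_le_preimDist_one i))
  constructor <;> linarith [preimDist_one_lt_crit hu hS, preimDist_one_lt_one_sub_crit hu hS]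

include hu hs hS

theorem mem_critPreimages_of_abs_sub_eq {i : ℕ} {z : ℝ} (hz : |z - c| = preimDist f c (S i)) :
    z ∈ critPreimages f c (S i) := by
  obtain ⟨z₀, hz₀, hd⟩ := hu.exists_preimDist_eq (hS.nonempty_critPreimages i)
  rcases abs_eq_abs.1 (hz.trans hd.symm) with h | h
  · rwa [sub_left_inj.1 h]
  · obtain rfl : z = 2 * c - z₀ := by linarith
    exact hs.two_mul_sub_mem_critPreimages (hS.one_le i) hz₀
      (uIcc_subset_Icc_of_abs_sub_le hu hS hz.le right_mem_uIcc)

theorem exists_mem_critPreimages_mem_uIoo {i : ℕ} {t : ℝ} (ht : preimDist f c (S i) < |t - c|) :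
    ∃ z ∈ critPreimages f c (S i), z ∈ uIoo c t := by
  have hd := hS.preimDist_pos i
  rcases le_or_gt t c with htc | hct
  · rw [abs_of_nonpos (sub_nonpos.2 htc)] at ht
    refine ⟨c - preimDist f c (S i), mem_critPreimages_of_abs_sub_eq hu hs hS ?_,
      mem_uIoo_of_gt (by linarith) (by linarith)⟩
    rw [sub_sub_cancel_left, abs_neg, abs_of_pos hd]
  · rw [abs_of_pos (sub_pos.2 hct)] at ht
    refine ⟨c + preimDist f c (S i), mem_critPreimages_of_abs_sub_eq hu hs hS ?_,
      mem_uIoo_of_lt (by linarith) (by linarith)⟩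
    rw [add_sub_cancel_left, abs_of_pos hd]

theorem exists_mem_uIoo_mem_critPreimages_sub (n : ℕ) :
    ∃ w ∈ uIoo c (f^[S n] c), w ∈ critPreimages f c (S (n + 1) - S n) := by
  obtain ⟨z, hz, hzd⟩ := hu.exists_preimDist_eq (hS.nonempty_critPreimages n)
  obtain ⟨z', hz', hz'z⟩ :=
    exists_mem_critPreimages_mem_uIoo hu hs hS (hzd ▸ hS.preimDist_succ_lt n)
  have hJ : uIcc c z ⊆ Icc 0 1 := uIcc_subset_Icc_of_abs_sub_le hu hS hzd.le
  have hbranch := hu.strictMonoOn_or_strictAntiOn_iterate_uIcc hJ fun j hj0 hjn x hx hxc =>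
    (hS.preimDist_lt_abs_of_lt hj0 hjn ⟨hJ hx, hxc⟩).not_ge (hzd ▸ abs_sub_left_of_mem_uIcc hx)
  refine ⟨f^[S n] z', ?_, hu.mapsTo_iterate _ hz'.1, ?_⟩
  · have := mem_uIoo_apply_of_strictMonoOn_or_strictAntiOn hbranch hz'z
    rwa [hz.2, uIoo_comm] at this
  · rw [← iterate_add_apply, Nat.sub_add_cancel (hS.le_succ n)]
    exact hz'.2

theorem preimDist_sub_lt_abs_iterate_sub (n : ℕ) :
    preimDist f c (S (n + 1) - S n) < |f^[S n] c - c| := by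
  obtain ⟨w, hw, hw'⟩ := exists_mem_uIoo_mem_critPreimages_sub hu hs hS n
  exact (preimDist_le_of_mem hw').trans_lt <| abs_sub_left_lt_of_mem_uIcc
    (uIoo_subset_uIcc_self hw) (ne_of_mem_of_not_mem hw right_notMem_uIoo)

theorem abs_iterate_sub_le_preimDist {k m : ℕ} (hkm : S k + S m < S (m + 1)) :
    |f^[S m] c - c| ≤ preimDist f c (S k) := by
  by_contra! h
  obtain ⟨x, hx, hxm⟩ := exists_mem_critPreimages_mem_uIoo hu hs hS h
  obtain ⟨z, hz, hzd⟩ := hu.exists_preimDist_eq (hS.nonempty_critPreimages m)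
  have hJ : uIcc c z ⊆ Icc 0 1 := uIcc_subset_Icc_of_abs_sub_le hu hS hzd.le
  obtain ⟨y, hy, hyx⟩ : x ∈ f^[S m] '' uIcc c z :=
    intermediate_value_uIcc ((hu.continuousOn_iterate _).mono hJ)
      (by rw [hz.2, uIcc_comm]; exact uIoo_subset_uIcc_self hxm)
  have hyz : y ≠ z := by
    rintro rfl
    exact left_notMem_uIoo (hyx ▸ hz.2 ▸ hxm)
  have hy' : y ∈ critPreimages f c (S k + S m) :=
    ⟨hJ hy, by rw [iterate_add_apply, hyx, hx.2]⟩
  have hcut : S (m + 1) ≤ S k + S m := (hS.2 m).2 ⟨Nat.le_add_left _ _, ⟨y, hy'⟩,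
    (preimDist_le_of_mem hy').trans_lt (hzd ▸ abs_sub_left_lt_of_mem_uIcc hy hyz)⟩
  omega

end

/-- If `c₂` were at least as far from `c` as `c₁`, then `c₂ ≤ ĉ₁ < c` and
monotonicity on `[0, c]` would give `c₃ ≤ f ĉ₁ = c₂`, whereas `|c₃| ≤ |c₋₁| < |c₂|`. -/
theorem abs_iterate_two_sub_lt_abs_apply_sub {f : ℝ → ℝ} {c : ℝ} (hf : IsFibonacciMap f c) :
    |f^[2] c - c| < |f c - c| := by
  obtain ⟨hu, hs, hS⟩ := hf
  have h1 : c < f c := crit_lt_apply_crit hu hS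
  have hfc := hu.mapsTo hu.crit_mem_Icc
  have hffc := hu.mapsTo hfc
  obtain ⟨w, hw, hw1, hfw⟩ := exists_mem_uIoo_mem_critPreimages_sub hu hs hS 0
  change w ∈ uIoo c (f c) at hw
  change f w = c at hfw
  rw [uIoo_of_lt h1] at hw
  have h2 := hu.strictAntiOn ⟨hw.1.le, hw1.2⟩ ⟨h1.le, hfc.2⟩ hw.2
  rw [hfw] at h2
  have hlow := preimDist_sub_lt_abs_iterate_sub hu hs hS 1
  change preimDist f c 1 < |f (f c) - c| at hlow
  have hup : |f (f (f c)) - c| ≤ preimDist f c 1 :=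
    abs_iterate_sub_le_preimDist hu hs hS (k := 0) (m := 2) (by decide)
  change |f (f c) - c| < |f c - c|
  rw [abs_of_neg (sub_neg.2 h2)] at hlow ⊢
  rw [abs_of_pos (sub_pos.2 h1)]
  by_contra! hle
  have hmirror : f (2 * c - f c) = f (f c) :=
    hs (f c) hfc ⟨by linarith [hffc.1], by linarith [hu.crit_mem_Ioo.2]⟩
  have h3 : f (f (f c)) ≤ f (2 * c - f c) := hu.strictMonoOn.monotoneOn
    ⟨hffc.1, h2.le⟩ ⟨by linarith [hffc.1], by linarith⟩ (by linarith)
  rw [hmirror] at h3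
  linarith [neg_abs_le (f (f (f c)) - c)]

/-- If `f` is a Fibonacci map then for every `n ≥ 0`,
`|c_{S_n}| > |c_{S_{n+1}}|`, i.e. `|f^{S_n}(c) - c| > |f^{S_{n+1}}(c) - c|`. -/
theorem fibonacci_critical_orbit_dist_strict_anti (f : ℝ → ℝ) (c : ℝ)
    (hf : IsFibonacciMap f c) :
    ∀ n : ℕ, |f^[fibS n] c - c| > |f^[fibS (n + 1)] c - c| := by
  rintro (_ | n)
  · exact abs_iterate_two_sub_lt_abs_apply_sub hf
  obtain ⟨hu, hs, hS⟩ := hf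
  have hfib : fibS n + fibS (n + 2) < fibS (n + 2 + 1) := by
    have := fibS_lt_fibS_succ n
    simp only [fibS] at this ⊢
    omega
  calc |f^[fibS (n + 2)] c - c|
      ≤ preimDist f c (fibS n) := abs_iterate_sub_le_preimDist hu hs hS hfib
    _ = preimDist f c (fibS (n + 2) - fibS (n + 1)) := by rw [fibS_add_two_sub]
    _ < |f^[fibS (n + 1)] c - c| := preimDist_sub_lt_abs_iterate_sub hu hs hS (n + 1)
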